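/- Let β, N₀, κ, ν > 0 and η ≥ 0 be real numbers. For M > 0 define EE_max(M) = sup over z > 0 of log₂(1 + (Mβ/N₀) z) / (z/κ + νM + η·log₂(1 + (Mβ/N₀) z)). Then EE_max(M) > 0 for every M > 0, EE_max(M) → 0 as M → 0⁺, EE_max(M) → 0 as M → ∞, and there exists a finite M* > 0 such that EE_max(M*) ≥ EE_max(M) for all M > 0. -/

import Mathlib

/-!
Write `c = β / N₀` and `f(M, z)` for the efficiency at power density `z`; dropping `η`,
`f(M, z) ≤ log₂(1 + cMz) / (z/κ + νM)`. From `log(1 + x) ≤ x` this is `O(M)` uniformly in `z`,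
and from `log(1 + x) ≤ 4 x^{1/4}` together with `z/κ + νM ≥ (z/κ)^{1/4} (νM)^{3/4}` it is
`O(M^{-1/2})` uniformly in `z`. This squeezes `EEmax` to `0` at both ends. As `M` and `z` play
symmetric roles, the same bounds hold in `z`, so `f` vanishes at the boundary of the open
quadrant; in the coordinates `(M, z) = (eˢ, eᵗ)` it tends to `0` along the cocompact filter of
`ℝ²`, hence attains a maximum at some `(M*, z*)`, and `EEmax(M) ≤ f(M*, z*) ≤ EEmax(M*)`.
-/

/-- The maximum energy efficiency over the power spectral density `z = P/B`,
as a function of the (real-valued) number of antennas `M`. -/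
noncomputable def EEmax (β N₀ κ ν η M : ℝ) : ℝ :=
  sSup {y : ℝ | ∃ z : ℝ, 0 < z ∧
    y = Real.logb 2 (1 + (M * β / N₀) * z) /
      (z / κ + ν * M + η * Real.logb 2 (1 + (M * β / N₀) * z))}

open Real Filter Topology Set Function

lemma Real.log_one_add_le_rpow_div {x p : ℝ} (hx : 0 ≤ x) (hp : 0 < p) (hp1 : p ≤ 1) :
    log (1 + x) ≤ x ^ p / p := by
  have h1 : 0 < 1 + x := by linarith
  have hsub : (1 + x) ^ p ≤ 1 + x ^ p := by
    simpa using rpow_add_le_add_rpow zero_le_one hx hp.le hp1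
  calc log (1 + x) = log ((1 + x) ^ p) / p := by rw [log_rpow h1]; field_simp
    _ ≤ ((1 + x) ^ p - 1) / p := by gcongr; exact log_le_sub_one_of_pos (by positivity)
    _ ≤ x ^ p / p := by gcongr; linarith

lemma Real.logb_one_add_le_rpow_div {b x p : ℝ} (hb : 1 < b) (hx : 0 ≤ x) (hp : 0 < p)
    (hp1 : p ≤ 1) : logb b (1 + x) ≤ x ^ p / (p * log b) := by
  have := log_pos hb
  rw [logb, ← div_div]
  gcongr
  exact log_one_add_le_rpow_div hx hp hp1

section RateOverCost

variable {c a b u v D : ℝ}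

lemma logb_one_add_mul_div_le_mul (hc : 0 ≤ c) (ha : 0 < a) (hu : 0 < u) (hv : 0 ≤ v)
    (hD : a * u ≤ D) :
    logb 2 (1 + c * (u * v)) / D ≤ c / (a * log 2) * v := by
  have hlog := logb_one_add_le_rpow_div one_lt_two (by positivity : 0 ≤ c * (u * v)) one_pos le_rfl
  calc logb 2 (1 + c * (u * v)) / D ≤ (c * (u * v) / log 2) / (a * u) := by
        rw [rpow_one, one_mul] at hlog
        gcongr
    _ = c / (a * log 2) * v := by field_simp

lemma logb_one_add_mul_div_le_div_sqrt (hc : 0 ≤ c) (ha : 0 < a) (hb : 0 < b) (hu : 0 < u)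
    (hv : 0 < v) (hDa : a * u ≤ D) (hDb : b * v ≤ D) :
    logb 2 (1 + c * (u * v)) / D ≤
      4 * c ^ (4⁻¹ : ℝ) / (log 2 * a ^ (4⁻¹ : ℝ) * b ^ (3 / 4 : ℝ)) / √v := by
  have hlog := logb_one_add_le_rpow_div one_lt_two (by positivity : 0 ≤ c * (u * v))
    (by norm_num : (0 : ℝ) < 4⁻¹) (by norm_num)
  have hD₀ : 0 < D := (mul_pos ha hu).trans_le hDa
  have hD : (a * u) ^ (4⁻¹ : ℝ) * (b * v) ^ (3 / 4 : ℝ) ≤ D :=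
    calc (a * u) ^ (4⁻¹ : ℝ) * (b * v) ^ (3 / 4 : ℝ) ≤ D ^ (4⁻¹ : ℝ) * D ^ (3 / 4 : ℝ) := by
          gcongr
      _ = D := by rw [← rpow_add hD₀]; norm_num
  calc logb 2 (1 + c * (u * v)) / D
      ≤ (c * (u * v)) ^ (4⁻¹ : ℝ) / (4⁻¹ * log 2) /
          ((a * u) ^ (4⁻¹ : ℝ) * (b * v) ^ (3 / 4 : ℝ)) := by
        gcongr
    _ = _ := by
        have hv' : v ^ (3 / 4 : ℝ) = v ^ (4⁻¹ : ℝ) * √v := by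
          rw [sqrt_eq_rpow, ← rpow_add hv]; norm_num
        simp only [mul_rpow, hc, ha.le, hb.le, hu.le, hv.le, hv', mul_nonneg]
        field_simp

lemma exists_tendsto_zero_and_logb_one_add_mul_div_le (hc : 0 ≤ c) (ha : 0 < a) (hb : 0 < b) :
    ∃ φ : ℝ → ℝ, Tendsto φ (𝓝[>] 0 ⊔ atTop) (𝓝 0) ∧
      ∀ u v D, 0 < u → 0 < v → a * u ≤ D → b * v ≤ D →
        logb 2 (1 + c * (u * v)) / D ≤ φ v := by
  set K := 4 * c ^ (4⁻¹ : ℝ) / (log 2 * a ^ (4⁻¹ : ℝ) * b ^ (3 / 4 : ℝ))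
  refine ⟨fun v ↦ min (c / (a * log 2) * v) (K / √v), ?_, fun u v D hu hv hDa hDb ↦
    le_min (logb_one_add_mul_div_le_mul hc ha hu hv.le hDa)
      (logb_one_add_mul_div_le_div_sqrt hc ha hb hu hv hDa hDb)⟩
  refine tendsto_sup.2 ⟨?_, ?_⟩
  · refine squeeze_zero' ?_ (Eventually.of_forall fun v ↦ min_le_left _ _) ?_
    · filter_upwards [self_mem_nhdsWithin] with v (hv : 0 < v)
      exact le_min (by positivity) (by positivity)
    · exact tendsto_nhdsWithin_of_tendsto_nhds ((continuous_const_mul _).tendsto' 0 0 (mul_zero _))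
  · refine squeeze_zero' ?_ (Eventually.of_forall fun v ↦ min_le_right _ _) ?_
    · filter_upwards [eventually_gt_atTop 0] with v hv
      exact le_min (by positivity) (by positivity)
    · exact tendsto_const_nhds.div_atTop tendsto_sqrt_atTop

end RateOverCost

theorem Continuous.exists_forall_ge_of_le_of_tendsto_zero {X Y : Type*} [TopologicalSpace X]
    [TopologicalSpace Y] {g : X × Y → ℝ} (hg : Continuous g) {φ : X → ℝ} {ψ : Y → ℝ}
    (hφ : Tendsto φ (cocompact X) (𝓝 0)) (hψ : Tendsto ψ (cocompact Y) (𝓝 0))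
    (hgφ : ∀ p, g p ≤ φ p.1) (hgψ : ∀ p, g p ≤ ψ p.2) {p₀ : X × Y} (hp₀ : 0 < g p₀) :
    ∃ p, ∀ q, g q ≤ g p := by
  refine hg.exists_forall_ge' p₀ ?_
  rw [← coprod_cocompact]
  refine eventually_sup.2 ⟨?_, ?_⟩
  · exact ((hφ.eventually (gt_mem_nhds hp₀)).comap Prod.fst).mono fun q hq ↦ (hgφ q).trans hq.le
  · exact ((hψ.eventually (gt_mem_nhds hp₀)).comap Prod.snd).mono fun q hq ↦ (hgψ q).trans hq.le

lemma Real.tendsto_exp_cocompact : Tendsto exp (cocompact ℝ) (𝓝[>] 0 ⊔ atTop) := by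
  rw [cocompact_eq_atBot_atTop]
  exact tendsto_exp_atBot_nhdsGT.sup_sup tendsto_exp_atTop

theorem ContinuousOn.exists_forall_le_of_le_of_tendsto_zero {f : ℝ → ℝ → ℝ}
    (hf : ContinuousOn (uncurry f) (Ioi 0 ×ˢ Ioi 0)) {φ ψ : ℝ → ℝ}
    (hφ : Tendsto φ (𝓝[>] 0 ⊔ atTop) (𝓝 0)) (hψ : Tendsto ψ (𝓝[>] 0 ⊔ atTop) (𝓝 0))
    (hfφ : ∀ x y, 0 < x → 0 < y → f x y ≤ φ x) (hfψ : ∀ x y, 0 < x → 0 < y → f x y ≤ ψ y)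
    {x₀ y₀ : ℝ} (hx₀ : 0 < x₀) (hy₀ : 0 < y₀) (hpos : 0 < f x₀ y₀) :
    ∃ x y, 0 < x ∧ 0 < y ∧ ∀ x' y', 0 < x' → 0 < y' → f x' y' ≤ f x y := by
  have hg : Continuous fun p : ℝ × ℝ ↦ f (exp p.1) (exp p.2) :=
    hf.comp_continuous (f := fun p : ℝ × ℝ ↦ (exp p.1, exp p.2)) (by fun_prop)
      fun p ↦ ⟨exp_pos p.1, exp_pos p.2⟩
  obtain ⟨p, hp⟩ := hg.exists_forall_ge_of_le_of_tendsto_zero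
    (hφ.comp tendsto_exp_cocompact) (hψ.comp tendsto_exp_cocompact)
    (fun q ↦ hfφ _ _ (exp_pos _) (exp_pos _)) (fun q ↦ hfψ _ _ (exp_pos _) (exp_pos _))
    (p₀ := (Real.log x₀, Real.log y₀)) (by simpa [exp_log hx₀, exp_log hy₀] using hpos)
  refine ⟨exp p.1, exp p.2, exp_pos _, exp_pos _, fun x y hx hy ↦ ?_⟩
  simpa [exp_log hx, exp_log hy] using hp (Real.log x, Real.log y)

noncomputable def energyEfficiency (c κ ν η M z : ℝ) : ℝ :=
  logb 2 (1 + c * (M * z)) / (z / κ + ν * M + η * logb 2 (1 + c * (M * z)))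

section EnergyEfficiency

variable {c κ ν η : ℝ}

lemma energyEfficiency_pos (hc : 0 < c) (hκ : 0 < κ) (hν : 0 ≤ ν) (hη : 0 ≤ η) {M z : ℝ}
    (hM : 0 < M) (hz : 0 < z) : 0 < energyEfficiency c κ ν η M z := by
  have hL : 0 < logb 2 (1 + c * (M * z)) :=
    logb_pos one_lt_two (lt_add_of_pos_right 1 (by positivity))
  unfold energyEfficiency
  positivity

lemma continuousOn_energyEfficiency (hc : 0 ≤ c) (hκ : 0 < κ) (hν : 0 ≤ ν) (hη : 0 ≤ η) :
    ContinuousOn (uncurry (energyEfficiency c κ ν η)) (Ioi 0 ×ˢ Ioi 0) := by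
  have hL : ∀ p ∈ Ioi (0 : ℝ) ×ˢ Ioi 0, 1 ≤ 1 + c * (p.1 * p.2) := fun p hp ↦
    le_add_of_nonneg_right (mul_nonneg hc (mul_nonneg (le_of_lt hp.1) (le_of_lt hp.2)))
  have hlogb : ContinuousOn (fun p : ℝ × ℝ ↦ logb 2 (1 + c * (p.1 * p.2))) (Ioi 0 ×ˢ Ioi 0) :=
    ContinuousOn.logb (by fun_prop) fun p hp ↦ (zero_lt_one.trans_le (hL p hp)).ne'
  refine hlogb.div (by fun_prop) fun p hp ↦ ?_
  have h₁ : 0 < p.1 := hp.1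
  have h₂ : 0 < p.2 := hp.2
  have : 0 ≤ logb 2 (1 + c * (p.1 * p.2)) := logb_nonneg one_lt_two (hL p hp)
  exact (by positivity : 0 < p.2 / κ + ν * p.1 + η * logb 2 (1 + c * (p.1 * p.2))).ne'

lemma exists_tendsto_zero_and_energyEfficiency_le (hc : 0 ≤ c) (hκ : 0 < κ) (hν : 0 < ν)
    (hη : 0 ≤ η) :
    ∃ φ ψ : ℝ → ℝ, Tendsto φ (𝓝[>] 0 ⊔ atTop) (𝓝 0) ∧ Tendsto ψ (𝓝[>] 0 ⊔ atTop) (𝓝 0) ∧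
      ∀ M z, 0 < M → 0 < z →
        energyEfficiency c κ ν η M z ≤ φ M ∧ energyEfficiency c κ ν η M z ≤ ψ z := by
  obtain ⟨φ, hφ, hφle⟩ := exists_tendsto_zero_and_logb_one_add_mul_div_le hc (inv_pos.2 hκ) hν
  obtain ⟨ψ, hψ, hψle⟩ := exists_tendsto_zero_and_logb_one_add_mul_div_le hc hν (inv_pos.2 hκ)
  refine ⟨φ, ψ, hφ, hψ, fun M z hM hz ↦ ?_⟩
  have hL : 0 ≤ η * logb 2 (1 + c * (M * z)) :=
    mul_nonneg hη (logb_nonneg one_lt_two (le_add_of_nonneg_right (by positivity)))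
  have hzD : κ⁻¹ * z ≤ z / κ + ν * M + η * logb 2 (1 + c * (M * z)) := by
    rw [inv_mul_eq_div]; linarith [mul_pos hν hM]
  have hMD : ν * M ≤ z / κ + ν * M + η * logb 2 (1 + c * (M * z)) := by
    linarith [div_pos hz hκ]
  have hφM := hφle z M _ hz hM hzD hMD
  rw [mul_comm z M] at hφM
  exact ⟨hφM, hψle M z _ hM hz hMD hzD⟩

end EnergyEfficiency

section EEmax

variable {β N₀ κ ν η M : ℝ}

lemma EEmax_eq_sSup_image :
    EEmax β N₀ κ ν η M = sSup (energyEfficiency (β / N₀) κ ν η M '' Ioi 0) := by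
  have h : ∀ z, M * β / N₀ * z = β / N₀ * (M * z) := fun z ↦ by ring
  simp only [EEmax, energyEfficiency, h, image, mem_Ioi, eq_comm]

lemma EEmax_le {B : ℝ} (h : ∀ z, 0 < z → energyEfficiency (β / N₀) κ ν η M z ≤ B) :
    EEmax β N₀ κ ν η M ≤ B := by
  rw [EEmax_eq_sSup_image]
  exact csSup_le (nonempty_Ioi.image _) (forall_mem_image.2 h)

lemma le_EEmax {B z : ℝ} (h : ∀ z, 0 < z → energyEfficiency (β / N₀) κ ν η M z ≤ B)
    (hz : 0 < z) : energyEfficiency (β / N₀) κ ν η M z ≤ EEmax β N₀ κ ν η M := by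
  rw [EEmax_eq_sSup_image]
  exact le_csSup ⟨B, forall_mem_image.2 h⟩ (mem_image_of_mem _ hz)

end EEmax

/-- `EEmax(M) > 0` for `M > 0`, `EEmax(M) → 0` as `M → 0⁺` and as `M → ∞`, and a finite
`M* > 0` maximizes `EEmax`. -/
theorem stmt_4 (β N₀ κ ν η : ℝ) (hβ : 0 < β) (hN : 0 < N₀) (hκ : 0 < κ)
    (hν : 0 < ν) (hη : 0 ≤ η) :
    (∀ M : ℝ, 0 < M → 0 < EEmax β N₀ κ ν η M) ∧
    Filter.Tendsto (EEmax β N₀ κ ν η) (nhdsWithin 0 (Set.Ioi 0)) (nhds 0) ∧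
    Filter.Tendsto (EEmax β N₀ κ ν η) Filter.atTop (nhds 0) ∧
    ∃ Mstar : ℝ, 0 < Mstar ∧
      ∀ M : ℝ, 0 < M → EEmax β N₀ κ ν η M ≤ EEmax β N₀ κ ν η Mstar := by
  have hc : 0 < β / N₀ := div_pos hβ hN
  obtain ⟨φ, ψ, hφ, hψ, hle⟩ := exists_tendsto_zero_and_energyEfficiency_le hc.le hκ hν hη
  have hEEmax : ∀ M z, 0 < M → 0 < z →
      energyEfficiency (β / N₀) κ ν η M z ≤ EEmax β N₀ κ ν η M := fun M z hM ↦
    le_EEmax fun z' hz' ↦ (hle M z' hM hz').1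
  have hpos : ∀ M, 0 < M → 0 < EEmax β N₀ κ ν η M := fun M hM ↦
    (energyEfficiency_pos hc hκ hν.le hη hM one_pos).trans_le (hEEmax M 1 hM one_pos)
  have hlim : Tendsto (EEmax β N₀ κ ν η) (𝓝[>] 0 ⊔ atTop) (𝓝 0) := by
    have hMpos : ∀ᶠ M in 𝓝[>] (0 : ℝ) ⊔ atTop, 0 < M :=
      eventually_sup.2 ⟨self_mem_nhdsWithin, eventually_gt_atTop 0⟩
    exact squeeze_zero' (hMpos.mono fun M hM ↦ (hpos M hM).le)
      (hMpos.mono fun M hM ↦ EEmax_le fun z hz ↦ (hle M z hM hz).1) hφ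
  obtain ⟨Mstar, zstar, hMstar, hzstar, hmax⟩ :=
    (continuousOn_energyEfficiency hc.le hκ hν.le hη).exists_forall_le_of_le_of_tendsto_zero
      hφ hψ (fun M z hM hz ↦ (hle M z hM hz).1) (fun M z hM hz ↦ (hle M z hM hz).2)
      one_pos one_pos (energyEfficiency_pos hc hκ hν.le hη one_pos one_pos)
  refine ⟨hpos, hlim.mono_left le_sup_left, hlim.mono_left le_sup_right, Mstar, hMstar,
    fun M hM ↦ EEmax_le fun z hz ↦ ?_⟩
  exact (hmax M z hM hz).trans (hEEmax Mstar zstar hMstar hzstar)
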